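/- Let s = σ + it be a complex number with 0 < σ < 1 and |t| > 1, and let a ∈ (0,1). Then the radial Abel means of the series ∑_{k≥1} k^{-s} e^{2πika} converge to F_s(a): lim_{r→1⁻} ∑_{k=1}^∞ k^{-s} r^k e^{2πika} = F_s(a). -/

import Mathlib

open MeasureTheory Complex Real Set Filter

/-- The periodized zeta function `F s a`, i.e. the analytic continuation in `s` of
`∑ k ≥ 1, exp (2πika) / k ^ s`, realized as Mathlib's `expZeta` at the point `a` of the
unit additive circle. -/
noncomputable def periodizedZeta (s : ℂ) (a : ℝ) : ℂ := HurwitzZeta.expZeta (a : UnitAddCircle) s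

/-!
For `0 < Re s`, Dirichlet's test makes the partial sums of `∑ k^{-s} e^{2πika}` converge
locally uniformly in `s`: the partial sums of `e^{2πika}` are bounded because `e^{2πia} ≠ 1`,
and by the mean value theorem `k ↦ k^{-s}` has summable variation `O(|s| k^{-Re s - 1})`.
The limit is therefore holomorphic on the half-plane `Re s > 0`; it agrees with `expZeta` where
`Re s > 1`, hence on the whole half-plane by the identity theorem. Abel's limit theorem then
turns the convergence of the series at `r = 1` into the convergence of its radial Abel means.
-/

open Finset Topology

theorem tendstoUniformlyOn_sum_range_smul_of_norm_sum_range_le {ι 𝕜 E : Type*} [NormedField 𝕜]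
    [NormedAddCommGroup E] [NormedSpace 𝕜 E] [CompleteSpace E] {f : ι → ℕ → 𝕜} {g : ℕ → E}
    {S : Set ι} {C : ℝ} {b v : ℕ → ℝ}
    (hg : ∀ n, ‖∑ i ∈ range n, g i‖ ≤ C) (hb : Tendsto b atTop (𝓝 0))
    (hfb : ∀ᶠ k in atTop, ∀ x ∈ S, ‖f x k‖ ≤ b k) (hv : Summable v)
    (hfv : ∀ᶠ k in atTop, ∀ x ∈ S, ‖f x (k + 1) - f x k‖ ≤ v k) :
    TendstoUniformlyOn (fun n x => ∑ k ∈ range n, f x k • g k)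
      (fun x => -∑' k, (f x (k + 1) - f x k) • ∑ i ∈ range (k + 1), g i) atTop S := by
  have hC : 0 ≤ C := by simpa using hg 0
  have hboundary :
      TendstoUniformlyOn (fun n x => f x (n - 1) • ∑ i ∈ range n, g i) 0 atTop S := by
    rw [Metric.tendstoUniformlyOn_iff]
    intro ε hε
    have hbC : Tendsto (fun n => b (n - 1) * C) atTop (𝓝 0) := by
      simpa using (hb.comp (tendsto_sub_atTop_nat 1)).mul_const C
    filter_upwards [(tendsto_sub_atTop_nat 1).eventually hfb, hbC.eventually (gt_mem_nhds hε)]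
      with n hn hnε x hx
    rw [Pi.zero_apply, dist_zero_left, norm_smul]
    exact (mul_le_mul (hn x hx) (hg n) (norm_nonneg _) ((norm_nonneg _).trans (hn x hx))).trans_lt
      hnε
  have hseries := tendstoUniformlyOn_tsum_nat_eventually (hv.mul_right C)
    (f := fun k x => (f x (k + 1) - f x k) • ∑ i ∈ range (k + 1), g i) <|
    hfv.mono fun k hk x hx => by
      rw [norm_smul]
      exact mul_le_mul (hk x hx) (hg _) (norm_nonneg _) ((norm_nonneg _).trans (hk x hx))
  have := hboundary.sub fun u hu => (tendsto_sub_atTop_nat 1).eventually (hseries u hu)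
  refine (this.congr (Eventually.of_forall fun n x _ => ?_)).congr_right fun x _ => ?_
  · exact (sum_range_by_parts (f x) g n).symm
  · simp

lemma norm_geom_sum_le_of_norm_le_one {K : Type*} [NormedDivisionRing K] {w : K} (hw : ‖w‖ ≤ 1)
    (hw1 : w ≠ 1) (n : ℕ) : ‖∑ i ∈ range n, w ^ i‖ ≤ 2 / ‖w - 1‖ := by
  rw [geom_sum_eq hw1, norm_div]
  gcongr
  calc ‖w ^ n - 1‖ ≤ ‖w‖ ^ n + ‖(1 : K)‖ := by rw [← norm_pow]; exact norm_sub_le _ _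
    _ ≤ 2 := by rw [norm_one]; linarith [pow_le_one₀ (norm_nonneg w) hw (n := n)]

lemma norm_natCast_cpow_neg_le {s : ℂ} {δ : ℝ} (hδ : δ ≤ s.re) {k : ℕ} (hk : 1 ≤ k) :
    ‖(k : ℂ) ^ (-s)‖ ≤ (k : ℝ) ^ (-δ) := by
  rw [norm_natCast_cpow_of_pos hk]
  exact Real.rpow_le_rpow_of_exponent_le (by exact_mod_cast hk) (by simpa using hδ)

lemma norm_ofReal_add_one_cpow_neg_sub_le {s : ℂ} (hs : -1 ≤ s.re) {x : ℝ} (hx : 0 < x) :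
    ‖((x + 1 : ℝ) : ℂ) ^ (-s) - (x : ℂ) ^ (-s)‖ ≤ ‖s‖ * x ^ (-s.re - 1) := by
  have hderiv : ∀ y ∈ Icc x (x + 1), HasDerivWithinAt (fun y : ℝ => (y : ℂ) ^ (-s))
      (-s * (y : ℂ) ^ (-s - 1)) (Icc x (x + 1)) y := fun y hy =>
    (hasStrictDerivAt_cpow_const (ofReal_mem_slitPlane.2 (hx.trans_le hy.1))).hasDerivAt
      |>.comp_ofReal.hasDerivWithinAt
  have hbound : ∀ y ∈ Ico x (x + 1), ‖-s * (y : ℂ) ^ (-s - 1)‖ ≤ ‖s‖ * x ^ (-s.re - 1) := by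
    intro y hy
    rw [norm_mul, norm_neg, norm_cpow_eq_rpow_re_of_pos (hx.trans_le hy.1)]
    gcongr
    simpa using Real.rpow_le_rpow_of_nonpos hx hy.1 (by linarith : -s.re - 1 ≤ 0)
  simpa using norm_image_sub_le_of_norm_deriv_le_segment' hderiv hbound (x + 1)
    (right_mem_Icc.2 (by linarith))

theorem tendstoLocallyUniformlyOn_sum_range_natCast_cpow_neg_mul_pow {w : ℂ} (hw : ‖w‖ ≤ 1)
    (hw1 : w ≠ 1) : ∃ L : ℂ → ℂ, TendstoLocallyUniformlyOn
      (fun n (s : ℂ) => ∑ k ∈ range n, (k : ℂ) ^ (-s) * w ^ k) L atTop {s | 0 < s.re} := by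
  have huniform : ∀ δ R : ℝ, 0 < δ → TendstoUniformlyOn
      (fun n (s : ℂ) => ∑ k ∈ range n, (k : ℂ) ^ (-s) * w ^ k)
      (fun s : ℂ => -∑' k, (((k + 1 : ℕ) : ℂ) ^ (-s) - (k : ℂ) ^ (-s)) • ∑ i ∈ range (k + 1), w ^ i)
      atTop {s | δ ≤ s.re ∧ ‖s‖ ≤ R} := by
    intro δ R hδ
    refine tendstoUniformlyOn_sum_range_smul_of_norm_sum_range_le
      (f := fun s k => (k : ℂ) ^ (-s)) (norm_geom_sum_le_of_norm_le_one hw hw1)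
      ((tendsto_rpow_neg_atTop hδ).comp tendsto_natCast_atTop_atTop)
      ((eventually_ge_atTop 1).mono fun k hk s hs => norm_natCast_cpow_neg_le hs.1 hk)
      ((Real.summable_nat_rpow.2 (by linarith : -δ - 1 < -1)).mul_left R)
      ((eventually_ge_atTop 1).mono fun k hk s hs => ?_)
    have hk₁ : (1 : ℝ) ≤ k := by exact_mod_cast hk
    calc ‖((k + 1 : ℕ) : ℂ) ^ (-s) - (k : ℂ) ^ (-s)‖ ≤ ‖s‖ * (k : ℝ) ^ (-s.re - 1) := by
          have := norm_ofReal_add_one_cpow_neg_sub_le (x := k) (by linarith [hs.1]) (by linarith)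
          push_cast at this ⊢
          exact this
      _ ≤ R * (k : ℝ) ^ (-δ - 1) :=
          mul_le_mul hs.2 (Real.rpow_le_rpow_of_exponent_le hk₁ (by linarith [hs.1]))
            (by positivity) ((norm_nonneg s).trans hs.2)
  refine ⟨_, tendstoLocallyUniformlyOn_of_forall_exists_nhds fun s₀ hs₀ =>
    ⟨{s | s₀.re / 2 < s.re ∧ ‖s‖ < ‖s₀‖ + 1}, mem_nhdsWithin_of_mem_nhds ?_,
      (huniform _ (‖s₀‖ + 1) (half_pos hs₀)).mono fun s hs => ⟨hs.1.le, hs.2.le⟩⟩⟩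
  exact ((isOpen_lt continuous_const continuous_re).inter
    (isOpen_lt continuous_norm continuous_const)).mem_nhds
      (show s₀.re / 2 < s₀.re ∧ ‖s₀‖ < ‖s₀‖ + 1 from ⟨half_lt_self hs₀, lt_add_one _⟩)

lemma exp_two_pi_I_mul_ne_one {a : ℝ} (ha : (a : UnitAddCircle) ≠ 0) :
    cexp (2 * π * I * a) ≠ 1 := by
  have h := (AddCircle.injective_toCircle one_ne_zero).ne ha
  rw [AddCircle.toCircle_zero, AddCircle.toCircle_apply_mk, ne_eq, ← Circle.coe_inj,
    Circle.coe_exp, Circle.coe_one] at h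
  convert h using 2
  push_cast
  ring

theorem tendsto_sum_range_natCast_cpow_neg_mul_pow_expZeta {a : ℝ} (ha : (a : UnitAddCircle) ≠ 0)
    {s : ℂ} (hs : 0 < s.re) :
    Tendsto (fun n => ∑ k ∈ range n, (k : ℂ) ^ (-s) * cexp (2 * π * I * a) ^ k) atTop
      (𝓝 (HurwitzZeta.expZeta a s)) := by
  have hU : IsOpen {s : ℂ | 0 < s.re} := isOpen_lt continuous_const continuous_re
  obtain ⟨L, hL⟩ := tendstoLocallyUniformlyOn_sum_range_natCast_cpow_neg_mul_pow
    (by simp [norm_exp]) (exp_two_pi_I_mul_ne_one ha)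
  have hL_diff : DifferentiableOn ℂ L {s | 0 < s.re} := by
    refine hL.differentiableOn (Eventually.of_forall fun n => ?_) hU
    refine DifferentiableOn.fun_sum fun k _ z hz => ?_
    refine (DifferentiableAt.mul_const ?_ _).differentiableWithinAt
    exact differentiableAt_neg_iff.2 differentiableAt_id |>.const_cpow
      (Or.inr (neg_ne_zero.2 (ne_of_apply_ne re (hz.ne' : z.re ≠ 0))))
  have hL_eq : L =ᶠ[𝓝 2] HurwitzZeta.expZeta a := by
    filter_upwards [(isOpen_lt continuous_const continuous_re).mem_nhds
      (show (1 : ℝ) < (2 : ℂ).re by norm_num)] with z hz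
    refine tendsto_nhds_unique (hL.tendsto_at (lt_trans one_pos hz)) ?_
    refine (HurwitzZeta.hasSum_expZeta_of_one_lt_re a hz).tendsto_sum_nat.congr fun n => ?_
    refine sum_congr rfl fun k _ => ?_
    rw [cpow_neg, ← Complex.exp_nat_mul, div_eq_inv_mul]
    ring_nf
  have := (hL_diff.analyticOnNhd hU).eqOn_of_preconnected_of_eventuallyEq
    ((HurwitzZeta.differentiable_expZeta_of_ne_zero ha).differentiableOn.analyticOnNhd hU)
    (convex_halfSpace_re_gt 0).isPreconnected (by norm_num) hL_eq hs
  exact this ▸ hL.tendsto_at hs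

theorem periodizedZeta_abel_limit_general (s : ℂ) (hσ0 : 0 < s.re)
    (a : ℝ) (ha : a ∈ Set.Ioo (0 : ℝ) 1) :
    Filter.Tendsto
      (fun r : ℝ =>
        ∑' k : ℕ+, (k : ℂ) ^ (-s) * (r : ℂ) ^ (k : ℕ) * Complex.exp (2 * π * Complex.I * k * a))
      (nhdsWithin 1 (Set.Iio 1)) (nhds (periodizedZeta s a)) := by
  have ha₀ : (a : UnitAddCircle) ≠ 0 := by
    rw [ne_eq, AddCircle.coe_eq_zero_iff_of_mem_Ico (Ioo_subset_Ico_self ha)]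
    exact ha.1.ne'
  have habel := Complex.tendsto_tsum_powerSeries_nhdsWithin_lt
    (tendsto_sum_range_natCast_cpow_neg_mul_pow_expZeta ha₀ hσ0)
  rw [tendsto_map'_iff] at habel
  refine habel.congr fun r => ?_
  have hs : -s ≠ 0 := neg_ne_zero.2 (ne_of_apply_ne re hσ0.ne')
  rw [Function.comp_apply, ← tsum_pnat_eq_tsum_of_eq_zero (by simp [zero_cpow hs])]
  refine tsum_congr fun k => ?_
  rw [← Complex.exp_nat_mul]
  ring_nf

/-- for `0 < Re s < 1`, `|Im s| > 1` and `a ∈ (0,1)`, the radial Abel means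
of the series `∑_{k≥1} k^{-s} e^{2πika}` converge to `F_s(a)` as `r → 1⁻`. -/
theorem periodizedZeta_abel_limit (s : ℂ) (hσ0 : 0 < s.re) (hσ1 : s.re < 1) (ht : 1 < |s.im|)
    (a : ℝ) (ha : a ∈ Set.Ioo (0 : ℝ) 1) :
    Filter.Tendsto
      (fun r : ℝ =>
        ∑' k : ℕ+, (k : ℂ) ^ (-s) * (r : ℂ) ^ (k : ℕ) * Complex.exp (2 * π * Complex.I * k * a))
      (nhdsWithin 1 (Set.Iio 1)) (nhds (periodizedZeta s a)) :=
  periodizedZeta_abel_limit_general s hσ0 a ha
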